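/- Target-shift lower bound: let μ₊ and μ₋ be probability measures on X, and for p' ∈ [0,1] let D(p') := p'·(μ₊ ⊗ δ_{+1}) + (1−p')·(μ₋ ⊗ δ_{−1}) be the corresponding data distribution on X × {−1,+1}. Let h : X → {−1,+1} be a measurable classifier with true positive rate TPR := μ₊({x : h(x) = +1}) and false positive rate FPR := μ₋({x : h(x) = +1}). Then for any source prior p ∈ [0,1] and induced prior q ∈ [0,1]: max{ err_{D(p)}(h), err_{D(q)}(h) } ≥ |p − q| · (1 − |TPR − FPR|) / 2. -/

import Mathlib

open MeasureTheory

/-- Classification error of classifier `h` (labels encoded as `Bool`, `true = +1`,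
`false = -1`) on a data distribution `D` over `X × Bool`. -/
noncomputable def err {X : Type*} [MeasurableSpace X]
    (D : Measure (X × Bool)) (h : X → Bool) : ℝ :=
  (D {p : X × Bool | h p.1 ≠ p.2}).toReal

/-- The target-shift family of data distributions: with class-conditional feature
distributions `μ₊` (for label `+1 = true`) and `μ₋` (for label `−1 = false`) and
positive-label prior `p'`, the data distribution is the mixture
`p' · (μ₊ ⊗ δ_{+1}) + (1 − p') · (μ₋ ⊗ δ_{−1})`. -/
noncomputable def targetShiftD {X : Type*} [MeasurableSpace X]
    (μp μn : Measure X) (p' : ℝ) : Measure (X × Bool) :=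
  (ENNReal.ofReal p') • (μp.prod (Measure.dirac true)) +
    (ENNReal.ofReal (1 - p')) • (μn.prod (Measure.dirac false))

/-!
With `a = μ₊{h = -1}` (so `TPR = 1 - a`) and `b = μ₋{h = +1} = FPR`, the error under prior `p'` is
the affine function `p' a + (1 - p') b`. For `p, q ∈ [0, 1]` both `p + q` and `(1 - p) + (1 - q)`
dominate `|p - q|`, so the two errors sum to at least `|p - q| (a + b)`; their maximum is at least
half of that, and `a + b ≥ 1 - |1 - a - b| = 1 - |TPR - FPR|`.
-/

section Misclassification

variable {X : Type*} [MeasurableSpace X]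

lemma measurableSet_misclassified {h : X → Bool} (hmeas : Measurable h) :
    MeasurableSet {z : X × Bool | h z.1 ≠ z.2} :=
  (measurableSet_eq_fun (hmeas.comp measurable_fst) measurable_snd).compl

lemma prod_dirac_apply_misclassified (μ : Measure X) [SFinite μ] {h : X → Bool}
    (hmeas : Measurable h) (y : Bool) :
    μ.prod (Measure.dirac y) {z : X × Bool | h z.1 ≠ z.2} = μ {x | h x ≠ y} := by
  rw [Measure.prod_dirac, Measure.map_apply measurable_prodMk_right
    (measurableSet_misclassified hmeas)]
  rfl

lemma err_targetShiftD (μp μn : Measure X) [IsFiniteMeasure μp] [IsFiniteMeasure μn]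
    {h : X → Bool} (hmeas : Measurable h) {p' : ℝ} (hp' : p' ∈ Set.Icc (0 : ℝ) 1) :
    err (targetShiftD μp μn p') h =
      p' * μp.real {x | h x = false} + (1 - p') * μn.real {x | h x = true} := by
  rw [err, targetShiftD, Measure.add_apply, Measure.smul_apply, Measure.smul_apply,
    prod_dirac_apply_misclassified μp hmeas, prod_dirac_apply_misclassified μn hmeas,
    smul_eq_mul, smul_eq_mul, ENNReal.toReal_add (by finiteness) (by finiteness),
    ENNReal.toReal_mul, ENNReal.toReal_mul, ENNReal.toReal_ofReal hp'.1,
    ENNReal.toReal_ofReal (sub_nonneg.2 hp'.2)]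
  simp only [ne_eq, Bool.not_eq_true, Bool.not_eq_false, measureReal_def]

end Misclassification

lemma abs_sub_mul_add_le_add_of_mem_Icc {p q a b : ℝ} (hp : p ∈ Set.Icc (0 : ℝ) 1)
    (hq : q ∈ Set.Icc (0 : ℝ) 1) (ha : 0 ≤ a) (hb : 0 ≤ b) :
    |p - q| * (a + b) ≤ (p * a + (1 - p) * b) + (q * a + (1 - q) * b) := by
  have hpq : |p - q| ≤ p + q := abs_sub_le_iff.2 ⟨by linarith [hq.1], by linarith [hp.1]⟩
  have hpq' : |p - q| ≤ (1 - p) + (1 - q) :=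
    abs_sub_le_iff.2 ⟨by linarith [hp.2], by linarith [hq.2]⟩
  calc |p - q| * (a + b) = |p - q| * a + |p - q| * b := mul_add _ _ _
    _ ≤ (p + q) * a + ((1 - p) + (1 - q)) * b := by gcongr
    _ = (p * a + (1 - p) * b) + (q * a + (1 - q) * b) := by ring

/-- Target-shift lower bound: for any classifier `h` with true positive rate
`TPR = μ₊({h = +1})` and false positive rate `FPR = μ₋({h = +1})`, and any source prior
`p` and induced prior `q`:
`max{err_{D(p)}(h), err_{D(q)}(h)} ≥ |p − q| · (1 − |TPR − FPR|) / 2`. -/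
theorem target_shift_lower_bound
    {X : Type*} [MeasurableSpace X]
    (μp μn : Measure X) [IsProbabilityMeasure μp] [IsProbabilityMeasure μn]
    (h : X → Bool) (hmeas : Measurable h)
    (p q : ℝ) (hp : p ∈ Set.Icc (0 : ℝ) 1) (hq : q ∈ Set.Icc (0 : ℝ) 1) :
    max (err (targetShiftD μp μn p) h) (err (targetShiftD μp μn q) h) ≥
      |p - q| *
        (1 - |(μp {x | h x = true}).toReal - (μn {x | h x = true}).toReal|) / 2 := by
  have htpr : (μp {x | h x = true}).toReal = 1 - μp.real {x | h x = false} := by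
    have hcompl : {x | h x = true}ᶜ = {x | h x = false} := by ext; simp
    rw [← hcompl, probReal_compl_eq_one_sub (measurableSet_eq_fun hmeas measurable_const),
      sub_sub_cancel, measureReal_def]
  rw [err_targetShiftD μp μn hmeas hp, err_targetShiftD μp μn hmeas hq, htpr, ge_iff_le]
  set a := μp.real {x | h x = false}
  set b := μn.real {x | h x = true}
  have hrate : 1 - |1 - a - b| ≤ a + b := by linarith [le_abs_self (1 - a - b)]
  calc |p - q| * (1 - |1 - a - b|) / 2 ≤ |p - q| * (a + b) / 2 := by gcongr
    _ ≤ ((p * a + (1 - p) * b) + (q * a + (1 - q) * b)) / 2 := by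
      gcongr
      exact abs_sub_mul_add_le_add_of_mem_Icc hp hq measureReal_nonneg measureReal_nonneg
    _ ≤ max (p * a + (1 - p) * b) (q * a + (1 - q) * b) := by
      linarith [le_max_left (p * a + (1 - p) * b) (q * a + (1 - q) * b),
        le_max_right (p * a + (1 - p) * b) (q * a + (1 - q) * b)]
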